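/- arXiv:1405.6669 — 5 statements merged into one kernel-verified Lean document; each statement's English description precedes it below -/
import Mathlib

section
/- Let $G$ be a group, let $l \ge 1$, and let $a_1,\dots,a_{2l+1}$ be elements of $G$ satisfying the braid relations. Then for all integers $m,i$ with $1 \le m \le 2l-1$ and $m \le i \le 2l-1$ one has $(a_{2l} a_{2l-1}\cdots a_1 \cdot a_{2l+1} a_{2l} \cdots a_m)\, a_{i+2}\, (a_{2l} a_{2l-1}\cdots a_1 \cdot a_{2l+1} a_{2l} \cdots a_m)^{-1} = a_i$ and $(a_m a_{m+1} \cdots a_{2l+1} \cdot a_1 a_2 \cdots a_{2l})^{-1}\, a_{i+2}\, (a_m a_{m+1} \cdots a_{2l+1} \cdot a_1 a_2 \cdots a_{2l}) = a_i$. -/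
/-- The product `a k * a (k-1) * ⋯ * a m` (descending indices). -/
def prodDesc {G : Type*} [Group G] (a : ℕ → G) (k m : ℕ) : G :=
  ((List.range (k + 1 - m)).map fun i => a (k - i)).prod

/-- The product `a m * a (m+1) * ⋯ * a k` (ascending indices). -/
def prodAsc {G : Type*} [Group G] (a : ℕ → G) (m k : ℕ) : G :=
  ((List.range (k + 1 - m)).map fun i => a (m + i)).prod

lemma prodDesc_empty {G : Type*} [Group G] (a : ℕ → G) (k m : ℕ) (h : k < m) :
    prodDesc a k m = 1 := by
  unfold prodDesc
  have : k + 1 - m = 0 := by omega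
  simp [this]

lemma prodDesc_cons {G : Type*} [Group G] (a : ℕ → G) (k m : ℕ) (hm : 1 ≤ m) (h : m ≤ k) :
    prodDesc a k m = a k * prodDesc a (k - 1) m := by
  unfold prodDesc
  have h1 : k + 1 - m = (k - 1 + 1 - m) + 1 := by omega
  rw [h1, List.range_succ_eq_map]
  simp only [List.map_cons, List.map_map, List.prod_cons, Nat.sub_zero]
  congr 1
  congr 1
  apply List.map_congr_left
  intro x _
  simp only [Function.comp]
  congr 1
  omega

lemma prodAsc_empty {G : Type*} [Group G] (a : ℕ → G) (m k : ℕ) (h : k < m) :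
    prodAsc a m k = 1 := by
  unfold prodAsc
  have : k + 1 - m = 0 := by omega
  simp [this]

lemma prodAsc_snoc {G : Type*} [Group G] (a : ℕ → G) (m k : ℕ) (hm : 1 ≤ m) (h : m ≤ k) :
    prodAsc a m k = prodAsc a m (k - 1) * a k := by
  unfold prodAsc
  have h1 : k + 1 - m = (k - 1 + 1 - m) + 1 := by omega
  rw [h1, List.range_succ]
  simp only [List.map_append, List.prod_append, List.map_cons, List.map_nil,
    List.prod_cons, List.prod_nil, mul_one]
  congr 2
  omega

section
variable {G : Type*} [Group G] (l : ℕ) (a : ℕ → G)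
variable (hbraid : ∀ i, 1 ≤ i → i + 1 ≤ 2 * l + 1 →
      a i * a (i + 1) * a i = a (i + 1) * a i * a (i + 1))
variable (hcomm : ∀ i j, 1 ≤ i → j ≤ 2 * l + 1 → i + 2 ≤ j → a i * a j = a j * a i)

include hcomm in
lemma prodDesc_comm (m : ℕ) (hm : 1 ≤ m) :
    ∀ k j, j ≤ 2 * l + 1 → k + 2 ≤ j → prodDesc a k m * a j = a j * prodDesc a k m := by
  intro k
  induction k with
  | zero => intro j hj hkj; rw [prodDesc_empty a 0 m hm]; simp
  | succ n ih =>
    intro j hj hkj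
    by_cases h : m ≤ n + 1
    · rw [prodDesc_cons a (n+1) m hm h]
      simp only [Nat.add_sub_cancel]
      rw [mul_assoc, ih j hj (by omega), ← mul_assoc,
        hcomm (n+1) j (by omega) hj (by omega), mul_assoc]
    · rw [prodDesc_empty a (n+1) m (by omega)]; simp

include hcomm in
lemma prodAsc_comm (m : ℕ) (hm : 1 ≤ m) :
    ∀ k j, j ≤ 2 * l + 1 → k + 2 ≤ j → prodAsc a m k * a j = a j * prodAsc a m k := by
  intro k
  induction k with
  | zero => intro j hj hkj; rw [prodAsc_empty a m 0 hm]; simp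
  | succ n ih =>
    intro j hj hkj
    by_cases h : m ≤ n + 1
    · rw [prodAsc_snoc a m (n+1) hm h]
      simp only [Nat.add_sub_cancel]
      rw [mul_assoc, hcomm (n+1) j (by omega) hj (by omega), ← mul_assoc,
        ih j hj (by omega), mul_assoc]
    · rw [prodAsc_empty a m (n+1) (by omega)]; simp

include hbraid hcomm in
lemma prodDesc_shift (m : ℕ) (hm : 1 ≤ m) :
    ∀ k, k ≤ 2 * l + 1 → ∀ i, m ≤ i → i + 1 ≤ k →
      prodDesc a k m * a (i + 1) = a i * prodDesc a k m := by
  intro k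
  induction k with
  | zero => intro _ i _ h; omega
  | succ n ih =>
    intro hk i hmi hin
    have hmn : m ≤ n + 1 := by omega
    rw [prodDesc_cons a (n+1) m hm hmn]
    simp only [Nat.add_sub_cancel]
    by_cases h : i + 1 ≤ n
    · rw [mul_assoc, ih (by omega) i hmi h, ← mul_assoc,
        ← hcomm i (n+1) (by omega) (by omega) (by omega), mul_assoc]
    · -- i = n
      have hi : n = i := by omega
      subst hi
      have hmn' : m ≤ n := by omega
      rw [prodDesc_cons a n m hm hmn']
      have hc : prodDesc a (n-1) m * a (n+1) = a (n+1) * prodDesc a (n-1) m :=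
        prodDesc_comm l a hcomm m hm (n-1) (n+1) (by omega) (by omega)
      have hb := hbraid n (by omega) (by omega)
      calc a (n+1) * (a n * prodDesc a (n-1) m) * a (n+1)
          = a (n+1) * a n * (prodDesc a (n-1) m * a (n+1)) := by group
        _ = a (n+1) * a n * (a (n+1) * prodDesc a (n-1) m) := by rw [hc]
        _ = (a (n+1) * a n * a (n+1)) * prodDesc a (n-1) m := by group
        _ = (a n * a (n+1) * a n) * prodDesc a (n-1) m := by rw [← hb]
        _ = a n * (a (n+1) * (a n * prodDesc a (n-1) m)) := by group

include hbraid hcomm in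
lemma prodAsc_shift (m : ℕ) (hm : 1 ≤ m) :
    ∀ k, k ≤ 2 * l + 1 → ∀ i, m ≤ i → i + 1 ≤ k →
      prodAsc a m k * a i = a (i + 1) * prodAsc a m k := by
  intro k
  induction k with
  | zero => intro _ i _ h; omega
  | succ n ih =>
    intro hk i hmi hin
    have hmn : m ≤ n + 1 := by omega
    rw [prodAsc_snoc a m (n+1) hm hmn]
    simp only [Nat.add_sub_cancel]
    by_cases h : i + 1 ≤ n
    · rw [mul_assoc, ← hcomm i (n+1) (by omega) (by omega) (by omega), ← mul_assoc,
        ih (by omega) i hmi h, mul_assoc]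
    · have hi : n = i := by omega
      subst hi
      have hmn' : m ≤ n := by omega
      rw [prodAsc_snoc a m n hm hmn']
      have hc : prodAsc a m (n-1) * a (n+1) = a (n+1) * prodAsc a m (n-1) :=
        prodAsc_comm l a hcomm m hm (n-1) (n+1) (by omega) (by omega)
      have hb := hbraid n (by omega) (by omega)
      calc prodAsc a m (n-1) * a n * a (n+1) * a n
          = prodAsc a m (n-1) * (a n * a (n+1) * a n) := by group
        _ = prodAsc a m (n-1) * (a (n+1) * a n * a (n+1)) := by rw [hb]
        _ = (prodAsc a m (n-1) * a (n+1)) * (a n * a (n+1)) := by group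
        _ = (a (n+1) * prodAsc a m (n-1)) * (a n * a (n+1)) := by rw [hc]
        _ = a (n+1) * (prodAsc a m (n-1) * a n * a (n+1)) := by group

end

/-- if `a 1, …, a (2l+1)` satisfy the braid relations (`l ≥ 1`), then for
`1 ≤ m ≤ 2l-1` and `m ≤ i ≤ 2l-1` we have
`(a (2l) ⋯ a 1 · a (2l+1) ⋯ a m) a (i+2) (a (2l) ⋯ a 1 · a (2l+1) ⋯ a m)⁻¹ = a i` and
`(a m ⋯ a (2l+1) · a 1 ⋯ a (2l))⁻¹ a (i+2) (a m ⋯ a (2l+1) · a 1 ⋯ a (2l)) = a i`. -/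
theorem statement1 {G : Type*} [Group G] (l : ℕ) (hl : 1 ≤ l) (a : ℕ → G)
    (hbraid : ∀ i, 1 ≤ i → i + 1 ≤ 2 * l + 1 →
      a i * a (i + 1) * a i = a (i + 1) * a i * a (i + 1))
    (hcomm : ∀ i j, 1 ≤ i → j ≤ 2 * l + 1 → i + 2 ≤ j → a i * a j = a j * a i)
    (m i : ℕ) (hm : 1 ≤ m) (hmk : m ≤ 2 * l - 1) (hmi : m ≤ i) (hik : i ≤ 2 * l - 1) :
    (prodDesc a (2 * l) 1 * prodDesc a (2 * l + 1) m) * a (i + 2) *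
      (prodDesc a (2 * l) 1 * prodDesc a (2 * l + 1) m)⁻¹ = a i ∧
    (prodAsc a m (2 * l + 1) * prodAsc a 1 (2 * l))⁻¹ * a (i + 2) *
      (prodAsc a m (2 * l + 1) * prodAsc a 1 (2 * l)) = a i := by
  have hi1 : i + 1 ≤ 2 * l := by omega
  constructor
  · have h1 : prodDesc a (2 * l + 1) m * a (i + 2) = a (i + 1) * prodDesc a (2 * l + 1) m := by
      have := prodDesc_shift l a hbraid hcomm m hm (2 * l + 1) le_rfl (i + 1) (by omega) (by omega)
      simpa using this
    have h2 : prodDesc a (2 * l) 1 * a (i + 1) = a i * prodDesc a (2 * l) 1 :=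
      prodDesc_shift l a hbraid hcomm 1 le_rfl (2 * l) (by omega) i (by omega) (by omega)
    have key : (prodDesc a (2 * l) 1 * prodDesc a (2 * l + 1) m) * a (i + 2)
        = a i * (prodDesc a (2 * l) 1 * prodDesc a (2 * l + 1) m) := by
      rw [mul_assoc, h1, ← mul_assoc, h2, mul_assoc]
    rw [key, mul_assoc]
    group
  · have h1 : prodAsc a 1 (2 * l) * a i = a (i + 1) * prodAsc a 1 (2 * l) :=
      prodAsc_shift l a hbraid hcomm 1 le_rfl (2 * l) (by omega) i (by omega) (by omega)
    have h2 : prodAsc a m (2 * l + 1) * a (i + 1) = a (i + 2) * prodAsc a m (2 * l + 1) := by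
      have := prodAsc_shift l a hbraid hcomm m hm (2 * l + 1) le_rfl (i + 1) (by omega) (by omega)
      simpa using this
    have key : (prodAsc a m (2 * l + 1) * prodAsc a 1 (2 * l)) * a i
        = a (i + 2) * (prodAsc a m (2 * l + 1) * prodAsc a 1 (2 * l)) := by
      rw [mul_assoc, h1, ← mul_assoc, h2, mul_assoc]
    rw [mul_assoc, ← key]
    group
end

section
/- Let $G$ be a group and let $a_1,\dots,a_k$ ($k \ge 2$) be elements of $G$ satisfying the braid relations, and set $b_i = a_{i+1} a_i a_{i+1}^{-1}$. Then the sequence $(a_1, a_2, \dots, a_{k-1}, a_k, a_1, a_2, \dots, a_{k-1})$ of length $2k-1$ is Hurwitz equivalent to the sequence $(b_1, b_2, \dots, b_{k-1}, a_k, a_k, \dots, a_k)$, where $a_k$ is repeated $k$ times. -/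
/-- One elementary (Hurwitz) transformation of sequences in a group. -/
def HurwitzStep {G : Type*} [Group G] (s t : List G) : Prop :=
  ∃ (l₁ l₂ : List G) (x y : G),
    (s = l₁ ++ x :: y :: l₂ ∧ t = l₁ ++ (x * y * x⁻¹) :: x :: l₂) ∨
    (s = l₁ ++ x :: y :: l₂ ∧ t = l₁ ++ y :: (y⁻¹ * x * y) :: l₂)

/-- Hurwitz equivalence: finitely many elementary transformations. -/
def HurwitzEquiv {G : Type*} [Group G] : List G → List G → Prop :=
  Relation.ReflTransGen HurwitzStep

/-- The sequence `a m, a (m+1), …, a k` (ascending indices). -/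
def seqAsc {G : Type*} (a : ℕ → G) (m k : ℕ) : List G :=
  (List.range (k + 1 - m)).map fun i => a (m + i)

/-!
Induct on `k`. Write `A k = (a 1, …, a k)`. Since `a (k+1)` commutes with `A (k-1)`, it slides
through the second block of `A (k+1) ++ A k`, leaving `A k ++ A (k-1) ++ (a (k+1), a k)`.
One Hurwitz move turns the last pair into `(b k, a (k+1))`, and the induction hypothesis
rewrites the front to `(b 1, …, b (k-1), a k, …, a k)`. The braid relation says exactly that
`b k⁻¹ * a k * b k = a (k+1)`, so `b k` moves left across the `k` copies of `a k`, turning each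
into `a (k+1)`.
-/

namespace HurwitzEquiv

variable {G : Type*} [Group G]

theorem refl (s : List G) : HurwitzEquiv s s := Relation.ReflTransGen.refl

theorem trans {s t u : List G} (h₁ : HurwitzEquiv s t) (h₂ : HurwitzEquiv t u) :
    HurwitzEquiv s u :=
  Relation.ReflTransGen.trans h₁ h₂

instance : Trans (@HurwitzEquiv G _) (@HurwitzEquiv G _) (@HurwitzEquiv G _) := ⟨trans⟩

theorem sigma (l r : List G) (x y : G) :
    HurwitzEquiv (l ++ x :: y :: r) (l ++ (x * y * x⁻¹) :: x :: r) :=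
  Relation.ReflTransGen.single ⟨l, r, x, y, Or.inl ⟨rfl, rfl⟩⟩

theorem sigma_inv (l r : List G) (x y : G) :
    HurwitzEquiv (l ++ x :: y :: r) (l ++ y :: (y⁻¹ * x * y) :: r) :=
  Relation.ReflTransGen.single ⟨l, r, x, y, Or.inr ⟨rfl, rfl⟩⟩

theorem append_append (l r : List G) {s t : List G} (h : HurwitzEquiv s t) :
    HurwitzEquiv (l ++ s ++ r) (l ++ t ++ r) := by
  refine Relation.ReflTransGen.lift (fun s => l ++ s ++ r) (fun s t hst => ?_) _ _ h
  obtain ⟨l₁, l₂, x, y, ⟨rfl, rfl⟩ | ⟨rfl, rfl⟩⟩ := hst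
  · exact ⟨l ++ l₁, l₂ ++ r, x, y, Or.inl ⟨by simp, by simp⟩⟩
  · exact ⟨l ++ l₁, l₂ ++ r, x, y, Or.inr ⟨by simp, by simp⟩⟩

theorem append_right (r : List G) {s t : List G} (h : HurwitzEquiv s t) :
    HurwitzEquiv (s ++ r) (t ++ r) := by
  simpa using append_append [] r h

theorem cons (x : G) {s t : List G} (h : HurwitzEquiv s t) :
    HurwitzEquiv (x :: s) (x :: t) := by
  simpa using append_append [x] [] h

theorem cons_of_forall_commute (c : G) :
    ∀ l : List G, (∀ z ∈ l, Commute c z) → HurwitzEquiv (c :: l) (l ++ [c])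
  | [], _ => refl _
  | z :: l, h => calc
      HurwitzEquiv (c :: z :: l) (z :: c :: l) := by
        simpa [(h z List.mem_cons_self).mul_inv_cancel] using sigma [] l c z
      HurwitzEquiv _ (z :: (l ++ [c])) :=
        cons z (cons_of_forall_commute c l fun w hw => h w (List.mem_cons_of_mem z hw))

theorem replicate_append_singleton {x b y : G} (h : b⁻¹ * x * b = y) :
    ∀ m : ℕ, HurwitzEquiv (List.replicate m x ++ [b]) (b :: List.replicate m y)
  | 0 => refl _
  | m + 1 => calc
      HurwitzEquiv (x :: (List.replicate m x ++ [b])) (x :: b :: List.replicate m y) :=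
        cons x (replicate_append_singleton h m)
      HurwitzEquiv _ (b :: y :: List.replicate m y) := by
        simpa [h] using sigma_inv [] (List.replicate m y) x b

end HurwitzEquiv

theorem conj_inv_mul_conj_of_braid {G : Type*} [Group G] {x y : G}
    (h : x * y * x = y * x * y) : (y * x * y⁻¹)⁻¹ * x * (y * x * y⁻¹) = y := calc
  _ = y * x⁻¹ * y⁻¹ * (x * y * x) * y⁻¹ := by group
  _ = y := by rw [h]; group

section seqAsc

variable {G : Type*} (a : ℕ → G)

theorem seqAsc_succ {m : ℕ} (k : ℕ) (hm : m ≤ k + 1) :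
    seqAsc a m (k + 1) = seqAsc a m k ++ [a (k + 1)] := by
  simp only [seqAsc, Nat.sub_add_comm hm, List.range_succ, List.map_append, List.map_cons,
    List.map_nil, Nat.add_sub_cancel' hm]

theorem mem_seqAsc {m k : ℕ} {z : G} : z ∈ seqAsc a m k ↔ ∃ j, m ≤ j ∧ j ≤ k ∧ a j = z := by
  simp only [seqAsc, List.mem_map, List.mem_range]
  constructor
  · rintro ⟨i, hi, rfl⟩
    exact ⟨m + i, by omega, by omega, rfl⟩
  · rintro ⟨j, hmj, hjk, rfl⟩
    exact ⟨j - m, by omega, by rw [Nat.add_sub_cancel' hmj]⟩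

end seqAsc

theorem hurwitzEquiv_seqAsc_append_seqAsc_succ {G : Type*} [Group G] (a : ℕ → G) (k : ℕ)
    (hbraid : a (k + 1) * a (k + 2) * a (k + 1) = a (k + 2) * a (k + 1) * a (k + 2))
    (hcomm : ∀ j, 1 ≤ j → j ≤ k → Commute (a (k + 2)) (a j))
    (hprev : HurwitzEquiv (seqAsc a 1 (k + 1) ++ seqAsc a 1 k)
      (seqAsc (fun i => a (i + 1) * a i * (a (i + 1))⁻¹) 1 k ++
        List.replicate (k + 1) (a (k + 1)))) :
    HurwitzEquiv (seqAsc a 1 (k + 2) ++ seqAsc a 1 (k + 1))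
      (seqAsc (fun i => a (i + 1) * a i * (a (i + 1))⁻¹) 1 (k + 1) ++
        List.replicate (k + 2) (a (k + 2))) := by
  set b := fun i => a (i + 1) * a i * (a (i + 1))⁻¹
  have hslide : HurwitzEquiv (a (k + 2) :: seqAsc a 1 k) (seqAsc a 1 k ++ [a (k + 2)]) :=
    HurwitzEquiv.cons_of_forall_commute _ _ fun z hz => by
      obtain ⟨j, hj₁, hjk, rfl⟩ := (mem_seqAsc a).1 hz
      exact hcomm j hj₁ hjk
  have habsorb : HurwitzEquiv (List.replicate (k + 1) (a (k + 1)) ++ [b (k + 1)])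
      (b (k + 1) :: List.replicate (k + 1) (a (k + 2))) :=
    HurwitzEquiv.replicate_append_singleton (conj_inv_mul_conj_of_braid hbraid) _
  calc HurwitzEquiv (seqAsc a 1 (k + 2) ++ seqAsc a 1 (k + 1))
        (seqAsc a 1 (k + 1) ++ (seqAsc a 1 k ++ [a (k + 2)]) ++ [a (k + 1)]) := by
        simpa [seqAsc_succ a _ (Nat.le_add_left 1 _)] using
          HurwitzEquiv.append_append (seqAsc a 1 (k + 1)) [a (k + 1)] hslide
    _ = (seqAsc a 1 (k + 1) ++ seqAsc a 1 k) ++ a (k + 2) :: a (k + 1) :: [] := by simp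
    HurwitzEquiv _ ((seqAsc a 1 (k + 1) ++ seqAsc a 1 k) ++ [b (k + 1), a (k + 2)]) :=
      HurwitzEquiv.sigma _ _ _ _
    HurwitzEquiv _ ((seqAsc b 1 k ++ List.replicate (k + 1) (a (k + 1))) ++
        [b (k + 1), a (k + 2)]) :=
      HurwitzEquiv.append_right _ hprev
    _ = seqAsc b 1 k ++ (List.replicate (k + 1) (a (k + 1)) ++ [b (k + 1)]) ++ [a (k + 2)] := by
      simp
    HurwitzEquiv _ (seqAsc b 1 k ++ (b (k + 1) :: List.replicate (k + 1) (a (k + 2))) ++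
        [a (k + 2)]) :=
      HurwitzEquiv.append_append _ _ habsorb
    _ = seqAsc b 1 (k + 1) ++ List.replicate (k + 2) (a (k + 2)) := by
      simp [seqAsc_succ b _ (Nat.le_add_left 1 _), List.replicate_succ']

theorem statement4_general {G : Type*} [Group G] (k : ℕ) (a : ℕ → G)
    (hbraid : ∀ i, 1 ≤ i → i + 1 ≤ k →
      a i * a (i + 1) * a i = a (i + 1) * a i * a (i + 1))
    (hcomm : ∀ i j, 1 ≤ i → j ≤ k → i + 2 ≤ j → a i * a j = a j * a i) :
    HurwitzEquiv (seqAsc a 1 k ++ seqAsc a 1 (k - 1))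
      (seqAsc (fun i => a (i + 1) * a i * (a (i + 1))⁻¹) 1 (k - 1) ++
        List.replicate k (a k)) := by
  induction k with
  | zero => exact HurwitzEquiv.refl _
  | succ k ih =>
    rcases k with _ | k
    · exact HurwitzEquiv.refl _
    · refine hurwitzEquiv_seqAsc_append_seqAsc_succ a k (hbraid (k + 1) (by omega) le_rfl)
        (fun j hj₁ hjk => (hcomm j (k + 2) hj₁ le_rfl (by omega)).symm) ?_
      exact ih (fun i hi₁ hik => hbraid i hi₁ (by omega))
        (fun i j hi₁ hjk => hcomm i j hi₁ (by omega))

/-- if `a 1, …, a k` (`k ≥ 2`) satisfy the braid relations and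
`b i = a (i+1) * a i * (a (i+1))⁻¹`, then
`(a 1, …, a k, a 1, …, a (k-1)) ∼ (b 1, …, b (k-1), a k, …, a k)`
with `a k` repeated `k` times. -/
theorem statement4 {G : Type*} [Group G] (k : ℕ) (hk : 2 ≤ k) (a : ℕ → G)
    (hbraid : ∀ i, 1 ≤ i → i + 1 ≤ k →
      a i * a (i + 1) * a i = a (i + 1) * a i * a (i + 1))
    (hcomm : ∀ i j, 1 ≤ i → j ≤ k → i + 2 ≤ j → a i * a j = a j * a i) :
    HurwitzEquiv (seqAsc a 1 k ++ seqAsc a 1 (k - 1))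
      (seqAsc (fun i => a (i + 1) * a i * (a (i + 1))⁻¹) 1 (k - 1) ++
        List.replicate k (a k)) :=
  statement4_general k a hbraid hcomm
end

section
/- Let $g \ge 2$ and let $G$ be a group containing elements $\alpha_1,\dots,\alpha_{2g}$ satisfying the braid relations. Then $(\alpha_1 \alpha_2 \cdots \alpha_{2g})^{2g+1} = (\alpha_1 \alpha_2 \cdots \alpha_{2g-1})^{2g} \cdot (\alpha_{2g} \alpha_{2g-1} \cdots \alpha_2 \alpha_1) \cdot (\alpha_1 \alpha_2 \cdots \alpha_{2g})$. -/
section Aux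
variable {G : Type*} [Group G]

lemma swap_head {a b c d : G} (h : a * b = c * d) (z : G) :
    a * (b * z) = c * (d * z) := by
  rw [← mul_assoc, h, mul_assoc]

lemma braid_assoc {a b : G} (h : a * b * a = b * a * b) (z : G) :
    a * (b * (a * z)) = b * (a * (b * z)) := by
  rw [← mul_assoc, ← mul_assoc, h, mul_assoc, mul_assoc]

lemma pA_nil (a : ℕ → G) {m k : ℕ} (h : k < m) : prodAsc a m k = 1 := by
  unfold prodAsc
  have h0 : k + 1 - m = 0 := by omega
  rw [h0]; simp

lemma pA_succ (a : ℕ → G) {m k : ℕ} (h : m ≤ k + 1) :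
    prodAsc a m (k + 1) = prodAsc a m k * a (k + 1) := by
  unfold prodAsc
  have h1 : k + 1 + 1 - m = (k + 1 - m) + 1 := by omega
  have h2 : m + (k + 1 - m) = k + 1 := by omega
  rw [h1, List.range_succ, List.map_append, List.prod_append, List.map_singleton,
    List.prod_singleton, h2]

lemma pA_one (a : ℕ → G) (m : ℕ) : prodAsc a m m = a m := by
  unfold prodAsc
  have h0 : m + 1 - m = 1 := by omega
  rw [h0, List.range_succ, List.range_zero, List.nil_append, List.map_singleton,
    List.prod_singleton, Nat.add_zero]

lemma pA_split (a : ℕ → G) {m k l : ℕ} (h1 : m ≤ k + 1) (h2 : k ≤ l) :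
    prodAsc a m l = prodAsc a m k * prodAsc a (k + 1) l := by
  unfold prodAsc
  have h3 : l + 1 - m = (k + 1 - m) + (l - k) := by omega
  have h4 : l + 1 - (k + 1) = l - k := by omega
  rw [h3, List.range_add, List.map_append, List.prod_append, h4, List.map_map]
  congr 2
  apply List.map_congr_left
  intro i _
  simp only [Function.comp_apply]
  congr 1
  omega

lemma pD_nil (a : ℕ → G) {k m : ℕ} (h : k < m) : prodDesc a k m = 1 := by
  unfold prodDesc
  have h0 : k + 1 - m = 0 := by omega
  rw [h0]; simp

lemma pD_cons (a : ℕ → G) {k m : ℕ} (h : m ≤ k + 1) :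
    prodDesc a (k + 1) m = a (k + 1) * prodDesc a k m := by
  unfold prodDesc
  have h1 : k + 1 + 1 - m = (k + 1 - m) + 1 := by omega
  rw [h1, List.range_succ_eq_map, List.map_cons, List.prod_cons]
  simp only [Nat.sub_zero]
  congr 1
  rw [List.map_map]
  congr 1
  apply List.map_congr_left
  intro i _
  simp only [Function.comp_apply]
  congr 1
  omega

lemma pD_one (a : ℕ → G) (m : ℕ) : prodDesc a m m = a m := by
  unfold prodDesc
  have h0 : m + 1 - m = 1 := by omega
  rw [h0, List.range_succ, List.range_zero, List.nil_append, List.map_singleton,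
    List.prod_singleton, Nat.sub_zero]

lemma pD_split (a : ℕ → G) {k m l : ℕ} (h1 : m ≤ l + 1) (h2 : l ≤ k) :
    prodDesc a k m = prodDesc a k (l + 1) * prodDesc a l m := by
  unfold prodDesc
  have h3 : k + 1 - m = (k - l) + (l + 1 - m) := by omega
  have h4 : k + 1 - (l + 1) = k - l := by omega
  rw [h3, List.range_add, List.map_append, List.prod_append, h4, List.map_map]
  congr 2
  apply List.map_congr_left
  intro i _
  simp only [Function.comp_apply]
  congr 1
  omega

lemma pD_snoc (a : ℕ → G) {k m : ℕ} (h : m ≤ k) :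
    prodDesc a k m = prodDesc a k (m + 1) * a m := by
  rw [pD_split a (l := m) (Nat.le_succ m) h, pD_one]

end Aux

section Braid

variable {G : Type*} [Group G]

def Dd (α : ℕ → G) : ℕ → G
  | 0 => 1
  | n + 1 => Dd α n * prodDesc α (n + 1) 1

def Ub (α : ℕ → G) (n : ℕ) : ℕ → G
  | 0 => 1
  | j + 1 => Ub α n j * prodAsc α (n - j) n

def Vv (α : ℕ → G) (n : ℕ) : ℕ → G
  | 0 => prodAsc α 1 n
  | j + 1 => Vv α n j * prodAsc α 1 (n - j - 1)

variable (α : ℕ → G) (N : ℕ)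
  (hc : ∀ i j, 1 ≤ i → j ≤ N → i + 2 ≤ j → α i * α j = α j * α i)
  (hb : ∀ i, 1 ≤ i → i + 1 ≤ N → α i * α (i + 1) * α i = α (i + 1) * α i * α (i + 1))

section Comm
include hc

lemma comm_pA_hi {x m k : ℕ} (hm : 1 ≤ m) (hx : x ≤ N) (hk : k + 2 ≤ x) :
    α x * prodAsc α m k = prodAsc α m k * α x := by
  induction k with
  | zero => rw [pA_nil α hm]; simp
  | succ j ih =>
    by_cases h : m ≤ j + 1
    · rw [pA_succ α h, ← mul_assoc, ih (by omega), mul_assoc,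
        (hc (j + 1) x (by omega) hx (by omega)).symm, ← mul_assoc]
    · rw [pA_nil α (by omega)]; simp

lemma comm_pA_lo {x m k : ℕ} (hx1 : 1 ≤ x) (hkN : k ≤ N) (hxm : x + 2 ≤ m) :
    α x * prodAsc α m k = prodAsc α m k * α x := by
  induction k with
  | zero => rw [pA_nil α (by omega)]; simp
  | succ j ih =>
    by_cases h : m ≤ j + 1
    · rw [pA_succ α h, ← mul_assoc, ih (by omega), mul_assoc,
        hc x (j + 1) hx1 hkN (by omega), ← mul_assoc]
    · rw [pA_nil α (by omega)]; simp

lemma comm_pD_hi {x m k : ℕ} (hm : 1 ≤ m) (hx : x ≤ N) (hk : k + 2 ≤ x) :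
    α x * prodDesc α k m = prodDesc α k m * α x := by
  induction k with
  | zero => rw [pD_nil α hm]; simp
  | succ j ih =>
    by_cases h : m ≤ j + 1
    · rw [pD_cons α h, ← mul_assoc, (hc (j + 1) x (by omega) hx (by omega)).symm,
        mul_assoc, ih (by omega), ← mul_assoc]
    · rw [pD_nil α (by omega)]; simp

lemma comm_pD_lo {x m k : ℕ} (hx1 : 1 ≤ x) (hkN : k ≤ N) (hxm : x + 2 ≤ m) :
    α x * prodDesc α k m = prodDesc α k m * α x := by
  induction k with
  | zero => rw [pD_nil α (by omega)]; simp
  | succ j ih =>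
    by_cases h : m ≤ j + 1
    · rw [pD_cons α h, ← mul_assoc, hc x (j + 1) hx1 hkN (by omega),
        mul_assoc, ih (by omega), ← mul_assoc]
    · rw [pD_nil α (by omega)]; simp

lemma comm_pA_pA {m1 k1 m2 k2 : ℕ} (hm1 : 1 ≤ m1) (hk2 : k2 ≤ N) (h : k1 + 2 ≤ m2) :
    prodAsc α m1 k1 * prodAsc α m2 k2 = prodAsc α m2 k2 * prodAsc α m1 k1 := by
  induction k1 with
  | zero => rw [pA_nil α hm1]; simp
  | succ j ih =>
    by_cases hh : m1 ≤ j + 1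
    · rw [pA_succ α hh, mul_assoc, comm_pA_lo α N hc (by omega) hk2 (by omega),
        ← mul_assoc, ih (by omega), mul_assoc]
    · rw [pA_nil α (by omega)]; simp

lemma comm_Dd {x m : ℕ} (hx : x ≤ N) (h : m + 2 ≤ x) :
    α x * Dd α m = Dd α m * α x := by
  induction m with
  | zero => show α x * 1 = 1 * α x; simp
  | succ j ih =>
    show α x * (Dd α j * prodDesc α (j + 1) 1) = Dd α j * prodDesc α (j + 1) 1 * α x
    rw [← mul_assoc, ih (by omega), mul_assoc,
      comm_pD_hi α N hc (by omega) hx (by omega), ← mul_assoc]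

end Comm


section Main
include hb hc

lemma shiftL {n i : ℕ} (h1 : 1 ≤ i) (h2 : i + 1 ≤ n) (hn : n ≤ N) :
    prodAsc α 1 n * α i = α (i + 1) * prodAsc α 1 n := by
  obtain ⟨j, rfl⟩ : ∃ j, i = j + 1 := ⟨i - 1, by omega⟩
  have e1 : prodAsc α 1 n = prodAsc α 1 (j + 2) * prodAsc α (j + 3) n :=
    pA_split α (by omega) (by omega)
  have e2 : prodAsc α 1 (j + 2) = prodAsc α 1 j * α (j + 1) * α (j + 2) := by
    rw [pA_succ α (by omega), pA_succ α (by omega)]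
  rw [e1, e2]
  simp only [mul_assoc]
  rw [(comm_pA_lo α N hc (by omega) hn (by omega) :
        α (j + 1) * prodAsc α (j + 3) n = prodAsc α (j + 3) n * α (j + 1)).symm]
  rw [braid_assoc (hb (j + 1) (by omega) (by omega))]
  rw [swap_head (comm_pA_hi α N hc (by omega) (by omega) (by omega) :
        α (j + 2) * prodAsc α 1 j = prodAsc α 1 j * α (j + 2)).symm]

lemma shiftR {n i : ℕ} (h1 : 1 ≤ i) (h2 : i + 1 ≤ n) (hn : n ≤ N) :
    prodDesc α n 1 * α (i + 1) = α i * prodDesc α n 1 := by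
  obtain ⟨j, rfl⟩ : ∃ j, i = j + 1 := ⟨i - 1, by omega⟩
  have e1 : prodDesc α n 1 = prodDesc α n (j + 3) * prodDesc α (j + 2) 1 :=
    pD_split α (by omega) (by omega)
  have e2 : prodDesc α (j + 2) 1 = α (j + 2) * (α (j + 1) * prodDesc α j 1) := by
    rw [pD_cons α (by omega), pD_cons α (by omega)]
  rw [e1, e2]
  simp only [mul_assoc]
  rw [(comm_pD_hi α N hc (by omega) (by omega) (by omega) :
        α (j + 2) * prodDesc α j 1 = prodDesc α j 1 * α (j + 2)).symm]
  rw [← braid_assoc (hb (j + 1) (by omega) (by omega))]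
  rw [swap_head (comm_pD_lo α N hc (by omega) hn (by omega) :
        α (j + 1) * prodDesc α n (j + 3) = prodDesc α n (j + 3) * α (j + 1)).symm]

lemma DdC : ∀ {n : ℕ}, n + 1 ≤ N → Dd α (n + 1) = prodAsc α 1 (n + 1) * Dd α n := by
  intro n
  induction n with
  | zero =>
    intro _
    show Dd α 0 * prodDesc α 1 1 = prodAsc α 1 1 * Dd α 0
    rw [pD_one, pA_one, show Dd α 0 = (1 : G) from rfl, one_mul, mul_one]
  | succ n ih =>
    intro h
    have key : Dd α (n + 1) * (α (n + 2) * prodDesc α (n + 1) 1)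
        = prodAsc α 1 (n + 1) * (α (n + 2) * Dd α (n + 1)) := by
      rw [ih (by omega)]
      simp only [mul_assoc]
      congr 1
      rw [← swap_head (comm_Dd α N hc (by omega) (by omega) :
            α (n + 2) * Dd α n = Dd α n * α (n + 2))]
      congr 1
      exact ih (by omega)
    show Dd α (n + 1) * prodDesc α (n + 2) 1 = prodAsc α 1 (n + 2) * Dd α (n + 1)
    rw [pD_cons α (k := n + 1) (m := 1) (by omega),
      pA_succ α (m := 1) (k := n + 1) (by omega), mul_assoc, key]

lemma DdRev : ∀ n, ∀ {i : ℕ}, 1 ≤ i → i ≤ n → n ≤ N →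
    Dd α n * α i = α (n + 1 - i) * Dd α n := by
  intro n
  induction n with
  | zero => intro i h1 h2 _; exact absurd h2 (by omega)
  | succ n ih =>
    intro i h1 h2 hN
    rcases Nat.lt_or_ge 1 i with hi | hi
    · obtain ⟨j, rfl⟩ : ∃ j, i = j + 2 := ⟨i - 2, by omega⟩
      have e : n + 1 + 1 - (j + 2) = n + 1 - (j + 1) := by omega
      rw [e, show Dd α (n + 1) = Dd α n * prodDesc α (n + 1) 1 from rfl, mul_assoc,
        shiftR α N hc hb (by omega) (by omega) hN,
        ← mul_assoc, ih (by omega) (by omega) (by omega), mul_assoc]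
    · have hi1 : i = 1 := by omega
      subst hi1
      rcases Nat.eq_zero_or_pos n with rfl | hn
      · show Dd α 0 * prodDesc α 1 1 * α 1 = α (0 + 1 + 1 - 1) * (Dd α 0 * prodDesc α 1 1)
        rw [pD_one, show Dd α 0 = (1 : G) from rfl, one_mul]
      · have e : n + 1 + 1 - 1 = n + 1 := by omega
        rw [e, DdC α N hc hb hN, mul_assoc, ih (by omega) (by omega) (by omega)]
        have e2 : n + 1 - 1 = n := by omega
        rw [e2, ← mul_assoc, shiftL α N hc hb (by omega) (by omega) hN, mul_assoc]

lemma DdAsc {n m : ℕ} (hm : 1 ≤ m) (hn : n ≤ N) :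
    ∀ k, k ≤ n → Dd α n * prodAsc α m k = prodDesc α (n + 1 - m) (n + 1 - k) * Dd α n := by
  intro k
  induction k with
  | zero =>
    intro _
    rw [pA_nil α (by omega), pD_nil α (by omega), one_mul, mul_one]
  | succ k ih =>
    intro hk1
    by_cases hmk : m ≤ k + 1
    · rw [pA_succ α hmk, ← mul_assoc, ih (by omega), mul_assoc,
        DdRev α N hc hb n (by omega) (by omega) hn, ← mul_assoc]
      congr 1
      have e : n + 1 - k = (n + 1 - (k + 1)) + 1 := by omega
      rw [e, ← pD_snoc α (by omega)]
    · rw [pA_nil α (by omega), pD_nil α (by omega), one_mul, mul_one]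

omit hb in
lemma comm_Ub {n : ℕ} (hn : n ≤ N) :
    ∀ j t, t + j + 1 ≤ n → Ub α n j * prodAsc α 1 t = prodAsc α 1 t * Ub α n j := by
  intro j
  induction j with
  | zero =>
    intro t _
    show (1 : G) * prodAsc α 1 t = prodAsc α 1 t * 1
    rw [one_mul, mul_one]
  | succ j ih =>
    intro t ht
    show Ub α n j * prodAsc α (n - j) n * prodAsc α 1 t
        = prodAsc α 1 t * (Ub α n j * prodAsc α (n - j) n)
    rw [mul_assoc, ← comm_pA_pA α N hc (by omega) hn (by omega : t + 2 ≤ n - j),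
      ← mul_assoc, ih t (by omega), mul_assoc]

lemma stair {n : ℕ} (hn : n ≤ N) :
    ∀ j, j ≤ n → prodAsc α 1 n ^ (j + 1) = Vv α n j * Ub α n j := by
  intro j
  induction j with
  | zero =>
    intro _
    show prodAsc α 1 n ^ 1 = prodAsc α 1 n * 1
    rw [pow_one, mul_one]
  | succ j ih =>
    intro hj
    rw [pow_succ, ih (by omega),
      show Vv α n (j + 1) = Vv α n j * prodAsc α 1 (n - j - 1) from rfl,
      show Ub α n (j + 1) = Ub α n j * prodAsc α (n - j) n from rfl]
    have hsplit : prodAsc α 1 n = prodAsc α 1 (n - j - 1) * prodAsc α (n - j) n := by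
      have e : n - j = (n - j - 1) + 1 := by omega
      rw [e]
      exact pA_split α (by omega) (by omega)
    rw [hsplit]
    simp only [mul_assoc]
    rw [swap_head (comm_Ub α N hc hn j (n - j - 1) (by omega))]

lemma VvD {n : ℕ} (hn : n ≤ N) :
    ∀ j, j + 1 ≤ n → Vv α n j * Dd α (n - j - 1) = Dd α n := by
  intro j
  induction j with
  | zero =>
    intro h
    obtain ⟨m, rfl⟩ : ∃ m, n = m + 1 := ⟨n - 1, by omega⟩
    show prodAsc α 1 (m + 1) * Dd α (m + 1 - 0 - 1) = Dd α (m + 1)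
    have e : m + 1 - 0 - 1 = m := by omega
    rw [e, ← DdC α N hc hb (by omega)]
  | succ j ih =>
    intro h
    show Vv α n j * prodAsc α 1 (n - j - 1) * Dd α (n - (j + 1) - 1) = Dd α n
    have e1 : n - j - 1 = (n - (j + 1) - 1) + 1 := by omega
    rw [mul_assoc, e1, ← DdC α N hc hb (by omega), ← e1, ih (by omega)]

lemma sqDd {n : ℕ} (h1 : 1 ≤ n) (hn : n ≤ N) :
    prodAsc α 1 n ^ (n + 1) = Dd α n * Dd α n := by
  have hst := stair α N hc hb hn n le_rfl
  have hVv : Vv α n n = Dd α n := by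
    obtain ⟨m, rfl⟩ : ∃ m, n = m + 1 := ⟨n - 1, by omega⟩
    show Vv α (m + 1) m * prodAsc α 1 (m + 1 - m - 1) = Dd α (m + 1)
    have e : m + 1 - m - 1 = 0 := by omega
    rw [e]
    have h := VvD α N hc hb hn m (by omega)
    have e2 : m + 1 - m - 1 = 0 := by omega
    rw [e2] at h
    rw [show prodAsc α 1 0 = 1 from pA_nil α (by omega),
      show Dd α 0 = 1 from rfl] at *
    rw [mul_one]
    rw [mul_one] at h
    exact h
  have hUb : ∀ j, j ≤ n → Dd α n * Ub α n j = Dd α j * Dd α n := by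
    intro j
    induction j with
    | zero =>
      intro _
      show Dd α n * 1 = 1 * Dd α n
      rw [one_mul, mul_one]
    | succ j ih =>
      intro hj
      show Dd α n * (Ub α n j * prodAsc α (n - j) n) = Dd α (j + 1) * Dd α n
      rw [← mul_assoc, ih (by omega), mul_assoc,
        DdAsc α N hc hb (by omega : 1 ≤ n - j) hn n le_rfl, ← mul_assoc]
      have e : n + 1 - (n - j) = j + 1 := by omega
      have e2 : n + 1 - n = 1 := by omega
      rw [e, e2]
      rfl
  rw [hst, hVv, hUb n le_rfl]

end Main
end Braid


/-- Lemma 5.1 of the paper: if `α 1, …, α (2g)` satisfy the braid relations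
(`g ≥ 2`), then `(α 1 ⋯ α (2g))^(2g+1) =
(α 1 ⋯ α (2g-1))^(2g) * (α (2g) ⋯ α 2 α 1) * (α 1 α 2 ⋯ α (2g))`. -/
theorem statement7 {G : Type*} [Group G] (g : ℕ) (hg : 2 ≤ g) (α : ℕ → G)
    (hbraid : ∀ i, 1 ≤ i → i + 1 ≤ 2 * g →
      α i * α (i + 1) * α i = α (i + 1) * α i * α (i + 1))
    (hcomm : ∀ i j, 1 ≤ i → j ≤ 2 * g → i + 2 ≤ j → α i * α j = α j * α i) :
    (prodAsc α 1 (2 * g)) ^ (2 * g + 1) =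
      (prodAsc α 1 (2 * g - 1)) ^ (2 * g) * prodDesc α (2 * g) 1 * prodAsc α 1 (2 * g) := by
  have key := sqDd α (2 * g) hcomm hbraid (n := 2 * g) (by omega) le_rfl
  obtain ⟨m, hm⟩ : ∃ m, 2 * g = m + 1 := ⟨2 * g - 1, by omega⟩
  have key' := sqDd α (2 * g) hcomm hbraid (n := m) (by omega) (by omega)
  have e1 : 2 * g - 1 = m := by omega
  rw [e1, hm, key']
  rw [hm] at key
  rw [key]
  have hAsc := DdAsc α (2 * g) hcomm hbraid (n := m + 1) (m := 1) (by omega) (by omega)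
    (m + 1) le_rfl
  have e2 : m + 1 + 1 - 1 = m + 1 := by omega
  have e3 : m + 1 + 1 - (m + 1) = 1 := by omega
  rw [e2, e3] at hAsc
  conv_rhs => rw [mul_assoc (Dd α m),
    show Dd α m * prodDesc α (m + 1) 1 = Dd α (m + 1) from rfl]
  rw [mul_assoc, hAsc, ← mul_assoc,
    show Dd α m * prodDesc α (m + 1) 1 = Dd α (m + 1) from rfl]
end

section
/- Let $g \ge 2$ and let $G$ be a group containing elements $\alpha_1,\dots,\alpha_{2g+1}, \alpha'$ such that: the element $T = \alpha_{2g+1} \alpha_{2g} \cdots \alpha_2 \alpha_1 \alpha_1 \alpha_2 \cdots \alpha_{2g} \alpha_{2g+1}$ satisfies $T \alpha_i T^{-1} = \alpha_i$ for every $1 \le i \le 2g$, and the element $S = \alpha_{2g} \cdots \alpha_2 \alpha_1 \alpha_1 \alpha_2 \cdots \alpha_{2g}$ satisfies $S \alpha' S^{-1} = \alpha_{2g+1}$. Then the sequence $(\alpha_{2g+1}, \alpha_{2g}, \dots, \alpha_2, \alpha_1, \alpha_1, \alpha_2, \dots, \alpha_{2g}, \alpha', \alpha_{2g+1}, \alpha_{2g},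 \dots, \alpha_2, \alpha_1, \alpha_1, \alpha_2, \dots, \alpha_{2g}, \alpha')$ of length $8g+4$ is Hurwitz equivalent to the sequence $(\alpha_{2g+1}, \alpha_{2g}, \dots, \alpha_2, \alpha_1, \alpha_{2g+1}, \alpha_{2g}, \dots, \alpha_2, \alpha_1, \alpha_1, \alpha_2, \dots, \alpha_{2g}, \alpha_{2g+1}, \alpha_1, \alpha_2, \dots, \alpha_{2g}, \alpha')$. -/
/-- The sequence `a k, a (k-1), …, a m` (descending indices). -/
def seqDesc {G : Type*} (a : ℕ → G) (k m : ℕ) : List G :=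
  (List.range (k + 1 - m)).map fun i => a (k - i)

/-! Write `β = α (2g+1)`, `D = (α 2g, …, α 1)`, `A = (α 1, …, α 2g)`. Pulling the first `α'` to the
left across `D A` turns it into `S α' S⁻¹ = β`, which exhibits the block `X = (β, D, A, β)` with
product `T`, directly followed by a copy of `D`. Since `T` centralises every `α i` with `i ≤ 2g`,
that copy of `D` passes to the left of `X` unchanged, and the sequence becomes
`(β, D, β, D, A, β, A, α')`. -/

namespace HurwitzEquiv

variable {G : Type*} [Group G]

theorem conj_left (pre suf : List G) (x y : G) :
    HurwitzEquiv (pre ++ x :: y :: suf) (pre ++ (x * y * x⁻¹) :: x :: suf) :=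
  Relation.ReflTransGen.single ⟨pre, suf, x, y, Or.inl ⟨rfl, rfl⟩⟩

theorem pull_left (pre L suf : List G) (y : G) :
    HurwitzEquiv (pre ++ L ++ y :: suf) (pre ++ (L.prod * y * L.prod⁻¹) :: (L ++ suf)) := by
  induction L generalizing pre with
  | nil =>
    simp only [List.append_nil, List.prod_nil, one_mul, inv_one, mul_one, List.nil_append]
    exact Relation.ReflTransGen.refl
  | cons x L ih =>
    have hconj : x * (L.prod * y * L.prod⁻¹) * x⁻¹ = (x :: L).prod * y * (x :: L).prod⁻¹ := by
      simp [mul_assoc]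
    have h₁ := ih (pre ++ [x])
    have h₂ := conj_left pre (L ++ suf) x (L.prod * y * L.prod⁻¹)
    rw [hconj] at h₂
    simp only [List.append_assoc, List.cons_append, List.nil_append] at h₁ h₂ ⊢
    exact h₁.trans h₂

theorem swap_of_conj_eq (pre X D suf : List G) (h : ∀ d ∈ D, X.prod * d * X.prod⁻¹ = d) :
    HurwitzEquiv (pre ++ X ++ D ++ suf) (pre ++ D ++ X ++ suf) := by
  induction D generalizing pre with
  | nil =>
    simp only [List.append_nil]
    exact Relation.ReflTransGen.refl
  | cons d D ih =>
    have h₁ := pull_left pre X (D ++ suf) d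
    rw [h d List.mem_cons_self] at h₁
    have h₂ := ih (pre ++ [d]) fun e he => h e (List.mem_cons_of_mem d he)
    simp only [List.append_assoc, List.cons_append, List.nil_append] at h₁ h₂ ⊢
    exact h₁.trans h₂

end HurwitzEquiv

theorem prod_seqDesc {G : Type*} [Group G] (a : ℕ → G) (k m : ℕ) :
    (seqDesc a k m).prod = prodDesc a k m :=
  rfl

theorem prod_seqAsc {G : Type*} [Group G] (a : ℕ → G) (m k : ℕ) :
    (seqAsc a m k).prod = prodAsc a m k :=
  rfl

theorem exists_of_mem_seqDesc {G : Type*} {a : ℕ → G} {k m : ℕ} {x : G}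
    (hx : x ∈ seqDesc a k m) : ∃ i, m ≤ i ∧ i ≤ k ∧ a i = x := by
  obtain ⟨j, hj, rfl⟩ := List.mem_map.mp hx
  exact ⟨k - j, by grind, by omega, rfl⟩

theorem statement9_general {G : Type*} [Group G] (g : ℕ) (α : ℕ → G) (α' : G)
    (hT : ∀ i, 1 ≤ i → i ≤ 2 * g →
      (α (2 * g + 1) * prodDesc α (2 * g) 1 * prodAsc α 1 (2 * g) * α (2 * g + 1)) * α i *
        (α (2 * g + 1) * prodDesc α (2 * g) 1 * prodAsc α 1 (2 * g) * α (2 * g + 1))⁻¹ = α i)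
    (hS : (prodDesc α (2 * g) 1 * prodAsc α 1 (2 * g)) * α' *
        (prodDesc α (2 * g) 1 * prodAsc α 1 (2 * g))⁻¹ = α (2 * g + 1)) :
    HurwitzEquiv
      ((α (2 * g + 1) :: (seqDesc α (2 * g) 1 ++ seqAsc α 1 (2 * g) ++ [α'])) ++
        (α (2 * g + 1) :: (seqDesc α (2 * g) 1 ++ seqAsc α 1 (2 * g) ++ [α'])))
      ((α (2 * g + 1) :: seqDesc α (2 * g) 1) ++
        (α (2 * g + 1) :: seqDesc α (2 * g) 1) ++
        seqAsc α 1 (2 * g) ++ [α (2 * g + 1)] ++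
        seqAsc α 1 (2 * g) ++ [α']) := by
  set β := α (2 * g + 1)
  set D := seqDesc α (2 * g) 1
  set A := seqAsc α 1 (2 * g)
  set X := β :: (D ++ A ++ [β])
  have hS' : (D ++ A).prod * α' * (D ++ A).prod⁻¹ = β := by
    rwa [List.prod_append, prod_seqDesc, prod_seqAsc]
  have hT' : ∀ d ∈ D, X.prod * d * X.prod⁻¹ = d := by
    intro d hd
    obtain ⟨i, hi₁, hi₂, rfl⟩ := exists_of_mem_seqDesc hd
    simpa [X, List.prod_append, D, A, prod_seqDesc, prod_seqAsc, mul_assoc] using hT i hi₁ hi₂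
  have pull := HurwitzEquiv.pull_left [β] (D ++ A) (β :: (D ++ A ++ [α'])) α'
  rw [hS'] at pull
  have swap := HurwitzEquiv.swap_of_conj_eq [β] X D (A ++ [α']) hT'
  simp only [X, List.append_assoc, List.cons_append, List.nil_append] at pull swap ⊢
  exact pull.trans swap

/-- Lemma 5.3 of the paper: assume
`T = α (2g+1) ⋯ α 1 α 1 ⋯ α (2g+1)` conjugates each `α i` (`1 ≤ i ≤ 2g`) to itself and
`S = α (2g) ⋯ α 1 α 1 ⋯ α (2g)` conjugates `α'` to `α (2g+1)`. Then
`(α (2g+1), α (2g), …, α 1, α 1, …, α (2g), α', α (2g+1), α (2g), …, α 1, α 1, …, α (2g), α')`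
is Hurwitz equivalent to
`(α (2g+1), α (2g), …, α 1, α (2g+1), α (2g), …, α 1, α 1, …, α (2g), α (2g+1), α 1, …, α (2g), α')`. -/
theorem statement9 {G : Type*} [Group G] (g : ℕ) (hg : 2 ≤ g) (α : ℕ → G) (α' : G)
    (hT : ∀ i, 1 ≤ i → i ≤ 2 * g →
      (α (2 * g + 1) * prodDesc α (2 * g) 1 * prodAsc α 1 (2 * g) * α (2 * g + 1)) * α i *
        (α (2 * g + 1) * prodDesc α (2 * g) 1 * prodAsc α 1 (2 * g) * α (2 * g + 1))⁻¹ = α i)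
    (hS : (prodDesc α (2 * g) 1 * prodAsc α 1 (2 * g)) * α' *
        (prodDesc α (2 * g) 1 * prodAsc α 1 (2 * g))⁻¹ = α (2 * g + 1)) :
    HurwitzEquiv
      ((α (2 * g + 1) :: (seqDesc α (2 * g) 1 ++ seqAsc α 1 (2 * g) ++ [α'])) ++
        (α (2 * g + 1) :: (seqDesc α (2 * g) 1 ++ seqAsc α 1 (2 * g) ++ [α'])))
      ((α (2 * g + 1) :: seqDesc α (2 * g) 1) ++
        (α (2 * g + 1) :: seqDesc α (2 * g) 1) ++
        seqAsc α 1 (2 * g) ++ [α (2 * g + 1)] ++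
        seqAsc α 1 (2 * g) ++ [α']) :=
  statement9_general g α α' hT hS
end

section
/- Let $g \ge 2$ and let $G$ be a group containing elements $c_1,\dots,c_{2g}$ satisfying the braid relations. Set $d_j = c_{j+1} c_j c_{j+1}^{-1}$, $\bar d_j = c_{j+1}^{-1} c_j c_{j+1}$, and $f_j = (c_{j-1} c_{j+1})^{-1} \bar d_j (c_{j-1} c_{j+1})$ with the convention $c_0 = 1$. Then the sequence $(c_1, c_2, \dots, c_{2g})$ repeated $4$ times (length $8g$) is Hurwitz equivalent to the sequence $(d_1, d_2, \dots, d_{2g-1}, c_2, c_2, c_4, c_4, \dots, c_{2g-2}, c_{2g-2}, c_{2g}, \dots, c_{2g}, f_1, f_3, \dots, f_{2g-1}, \bar d_1, \bar d_3, \dots, \bar d_{2g-1})$, where $c_{2g}$ is repeated $2g+3$ times. -/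
namespace HW
variable {G : Type*} [Group G]

theorem he_refl (s : List G) : HurwitzEquiv s s := Relation.ReflTransGen.refl

theorem he_of_eq {s t : List G} (h : s = t) : HurwitzEquiv s t := h ▸ he_refl s

theorem he_trans {s t u : List G} (h1 : HurwitzEquiv s t) (h2 : HurwitzEquiv t u) :
    HurwitzEquiv s u := Relation.ReflTransGen.trans h1 h2

theorem step_he {s t : List G} (h : HurwitzStep s t) : HurwitzEquiv s t :=
  Relation.ReflTransGen.single h

theorem step_context {s t : List G} (u v : List G) (h : HurwitzStep s t) :
    HurwitzStep (u ++ s ++ v) (u ++ t ++ v) := by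
  obtain ⟨l₁, l₂, x, y, h | h⟩ := h
  · exact ⟨u ++ l₁, l₂ ++ v, x, y, .inl ⟨by simp [h.1], by simp [h.2]⟩⟩
  · exact ⟨u ++ l₁, l₂ ++ v, x, y, .inr ⟨by simp [h.1], by simp [h.2]⟩⟩

theorem he_context {s t : List G} (u v : List G) (h : HurwitzEquiv s t) :
    HurwitzEquiv (u ++ s ++ v) (u ++ t ++ v) := by
  induction h with
  | refl => exact he_refl _
  | tail _ h ih => exact Relation.ReflTransGen.tail ih (step_context u v h)

theorem he_append_left (u : List G) {s t : List G} (h : HurwitzEquiv s t) :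
    HurwitzEquiv (u ++ s) (u ++ t) := by
  simpa using he_context u [] h

theorem he_append_right {s t : List G} (h : HurwitzEquiv s t) (v : List G) :
    HurwitzEquiv (s ++ v) (t ++ v) := by
  simpa using he_context [] v h

theorem he_cons (x : G) {s t : List G} (h : HurwitzEquiv s t) :
    HurwitzEquiv (x :: s) (x :: t) := by
  simpa using he_append_left [x] h

theorem he_append {s t u v : List G} (h1 : HurwitzEquiv s t) (h2 : HurwitzEquiv u v) :
    HurwitzEquiv (s ++ u) (t ++ v) :=
  he_trans (he_append_right h1 u) (he_append_left t h2)

theorem pair_pos (x y : G) : HurwitzEquiv [x, y] [x * y * x⁻¹, x] :=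
  step_he ⟨[], [], x, y, .inl ⟨rfl, rfl⟩⟩

theorem pair_neg (x y : G) : HurwitzEquiv [x, y] [y, y⁻¹ * x * y] :=
  step_he ⟨[], [], x, y, .inr ⟨rfl, rfl⟩⟩

theorem pair_swap {x y : G} (h : x * y = y * x) : HurwitzEquiv [x, y] [y, x] := by
  have e : y⁻¹ * x * y = x := by
    rw [mul_assoc, h, ← mul_assoc, inv_mul_cancel, one_mul]
  have := pair_neg x y
  rwa [e] at this

theorem pass_block (x : G) (B : List G) :
    HurwitzEquiv (x :: B) (B ++ [B.prod⁻¹ * x * B.prod]) := by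
  induction B generalizing x with
  | nil => simpa using he_refl [x]
  | cons b B ih =>
    have h1 : HurwitzEquiv (x :: b :: B) (b :: (b⁻¹ * x * b) :: B) :=
      step_he ⟨[], B, x, b, .inr ⟨rfl, rfl⟩⟩
    refine he_trans h1 ?_
    have h2 := he_cons b (ih (b⁻¹ * x * b))
    refine he_trans h2 (he_of_eq ?_)
    simp [List.prod_cons, mul_assoc, mul_inv_rev]

theorem comm_single {x : G} {B : List G} (h : ∀ b ∈ B, x * b = b * x) :
    HurwitzEquiv (x :: B) (B ++ [x]) := by
  induction B with
  | nil => exact he_refl _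
  | cons b B ih =>
    have h1 : HurwitzEquiv (x :: b :: B) (b :: x :: B) :=
      he_append_right (pair_swap (h b (by simp))) B
    exact he_trans h1 (he_cons b (ih fun b hb => h b (by simp [hb])))

theorem comm_lists {A B : List G} (h : ∀ a ∈ A, ∀ b ∈ B, a * b = b * a) :
    HurwitzEquiv (A ++ B) (B ++ A) := by
  induction A with
  | nil => simpa using he_refl B
  | cons a A ih =>
    have h1 : HurwitzEquiv (a :: (A ++ B)) (a :: (B ++ A)) :=
      he_cons a (ih fun a ha => h a (by simp [ha]))
    refine he_trans h1 ?_
    have h2 : HurwitzEquiv (a :: B) (B ++ [a]) := comm_single (h a (by simp))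
    have h3 := he_append_right h2 A
    refine he_trans (he_of_eq ?_) (he_trans h3 (he_of_eq ?_)) <;> simp

theorem replicate_pass (m : ℕ) (x y : G) :
    HurwitzEquiv (List.replicate m x ++ [y]) (y :: List.replicate m (y⁻¹ * x * y)) := by
  induction m with
  | zero => exact he_refl _
  | succ m ih =>
    have h1 : HurwitzEquiv (x :: (List.replicate m x ++ [y]))
        (x :: y :: List.replicate m (y⁻¹ * x * y)) := he_cons x ih
    have h2 : HurwitzEquiv (x :: y :: List.replicate m (y⁻¹ * x * y))
        (y :: (y⁻¹ * x * y) :: List.replicate m (y⁻¹ * x * y)) :=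
      he_append_right (pair_neg x y) _
    refine he_trans (he_of_eq ?_) (he_trans h1 (he_trans h2 (he_of_eq ?_))) <;>
      simp [List.replicate_succ]

theorem seqAsc_nil (a : ℕ → G) {m k : ℕ} (h : k < m) : seqAsc a m k = [] := by
  unfold seqAsc
  rw [Nat.sub_eq_zero_of_le (by omega)]
  simp

theorem seqAsc_cons (a : ℕ → G) {m k : ℕ} (h : m ≤ k) :
    seqAsc a m k = a m :: seqAsc a (m + 1) k := by
  unfold seqAsc
  rw [show k + 1 - m = (k - m) + 1 by omega, List.range_succ_eq_map]
  rw [show k + 1 - (m + 1) = k - m by omega]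
  simp only [List.map_cons, List.map_map, Nat.add_zero]
  congr 1
  refine List.map_congr_left fun i _ => ?_
  simp only [Function.comp_apply]
  congr 1
  omega

theorem map_range_congr {α : Type*} (f f' : ℕ → α) (t : ℕ) (h : ∀ i < t, f i = f' i) :
    (List.range t).map f = (List.range t).map f' :=
  List.map_congr_left fun i hi => h i (List.mem_range.mp hi)

theorem mem_seqAsc {a : ℕ → G} {m k : ℕ} {b : G} (h : b ∈ seqAsc a m k) :
    ∃ i, m ≤ i ∧ i ≤ k ∧ b = a i := by
  unfold seqAsc at h
  simp only [List.mem_map, List.mem_range] at h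
  obtain ⟨i, hi, rfl⟩ := h
  exact ⟨m + i, by omega, by omega, rfl⟩


def dd (c : ℕ → G) (i : ℕ) : G := c (i + 1) * c i * (c (i + 1))⁻¹

def Amix (c : ℕ → G) (k : ℕ) : List G :=
  ((List.range k).map fun j => [c (j + 1), dd c (j + 1)]).flatten

def Dlist (c : ℕ → G) (m : ℕ) : List G := (List.range m).map fun j => dd c (j + 1)

def Rest (c : ℕ → G) (k n : ℕ) : List G :=
  ((List.range (n - k)).map fun j => [dd c (k + j), c (k + j + 1)]).flatten ++ [c n]

theorem Amix_succ (c : ℕ → G) (k : ℕ) :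
    Amix c (k + 1) = Amix c k ++ [c (k + 1), dd c (k + 1)] := by
  unfold Amix; rw [List.range_succ]; simp

theorem Dlist_succ (c : ℕ → G) (m : ℕ) :
    Dlist c (m + 1) = Dlist c m ++ [dd c (m + 1)] := by
  unfold Dlist; rw [List.range_succ]; simp

theorem flatten_range_cons {α : Type*} (F : ℕ → List α) (t : ℕ) :
    ((List.range (t + 1)).map F).flatten = F 0 ++ ((List.range t).map fun j => F (j + 1)).flatten := by
  rw [List.range_succ_eq_map]
  simp only [List.map_cons, List.flatten_cons, List.map_map]
  congr 1

theorem Rest_cons (c : ℕ → G) {k n : ℕ} (h : k + 2 ≤ n) :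
    Rest c k n = dd c k :: c (k + 1) :: Rest c (k + 1) n := by
  unfold Rest
  rw [show n - k = (n - (k + 1)) + 1 by omega, flatten_range_cons]
  have : ((List.range (n - (k + 1))).map fun j => [dd c (k + (j + 1)), c (k + (j + 1) + 1)]) =
      ((List.range (n - (k + 1))).map fun j => [dd c (k + 1 + j), c (k + 1 + j + 1)]) := by
    refine map_range_congr _ _ _ fun i _ => ?_
    have e1 : k + (i + 1) = k + 1 + i := by omega
    rw [e1]
  simp [this]

theorem Rest_last (c : ℕ → G) {k n : ℕ} (h : k + 1 = n) :
    Rest c k n = [dd c k, c (k + 1), c n] := by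
  unfold Rest
  rw [show n - k = 1 by omega]
  simp [List.range_succ]

theorem phase1 (c : ℕ → G) (n : ℕ)
    (hcomm : ∀ i j, 1 ≤ i → j ≤ n → i + 2 ≤ j → c i * c j = c j * c i) :
    ∀ j k, k + j + 1 = n →
      HurwitzEquiv (Amix c k ++ seqAsc c (k + 1) n ++ seqAsc c (k + 1) n)
        (Amix c (n - 1) ++ [c n, c n]) := by
  intro j
  induction j with
  | zero =>
    intro k hk
    have hk' : k = n - 1 := by omega
    subst hk'
    have h1 : seqAsc c (n - 1 + 1) n = [c n] := by
      rw [seqAsc_cons c (by omega), show n - 1 + 1 = n by omega, seqAsc_nil c (by omega)]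
    refine he_of_eq ?_
    rw [h1]; simp
  | succ j ih =>
    intro k hk
    have h2 : k + 2 ≤ n := by omega
    have e1 : seqAsc c (k + 1) n = c (k + 1) :: c (k + 2) :: seqAsc c (k + 3) n := by
      rw [seqAsc_cons c (by omega), seqAsc_cons c (by omega)]
    -- move second copy's head left
    have hcm : ∀ a ∈ seqAsc c (k + 3) n, ∀ b ∈ [c (k + 1)], a * b = b * a := by
      intro a ha b hb
      obtain ⟨i, hi1, hi2, rfl⟩ := mem_seqAsc ha
      simp only [List.mem_singleton] at hb
      subst hb
      exact (hcomm (k + 1) i (by omega) (by omega) (by omega)).symm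
    have step1 := he_context (Amix c k ++ [c (k + 1), c (k + 2)]) (seqAsc c (k + 2) n)
      (comm_lists hcm)
    -- σ move on (c (k+2), c (k+1))
    have step2 := he_context (Amix c k ++ [c (k + 1)]) (seqAsc c (k + 3) n ++ seqAsc c (k + 2) n)
      (pair_pos (c (k + 2)) (c (k + 1)))
    have e2 : seqAsc c (k + 2) n = c (k + 2) :: seqAsc c (k + 3) n := seqAsc_cons c (by omega)
    refine he_trans (he_of_eq ?_) (he_trans step1 (he_trans (he_of_eq ?_)
      (he_trans step2 (he_trans (he_of_eq ?_) (ih (k + 1) (by omega))))))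
    · rw [e1]; rw [e2]; simp
    · simp
    · have e3 : dd c (k + 1) = c (k + 2) * c (k + 1) * (c (k + 2))⁻¹ := rfl
      rw [Amix_succ, show k + 1 + 1 = k + 2 by omega, e2, ← e3]; simp

theorem phase2 (c : ℕ → G) (n : ℕ)
    (hbraid : ∀ i, 1 ≤ i → i + 1 ≤ n → c i * c (i + 1) * c i = c (i + 1) * c i * c (i + 1)) :
    ∀ j k, k + j + 2 = n →
      HurwitzEquiv (Dlist c k ++ List.replicate (k + 1) (c (k + 1)) ++ Rest c (k + 1) n)
        (Dlist c (n - 1) ++ List.replicate (n + 1) (c n)) := by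
  have dd_pass : ∀ k, 1 ≤ k → k + 1 ≤ n → (dd c k)⁻¹ * c k * dd c k = c (k + 1) := by
    intro k h1 h2
    have hb := hbraid k h1 h2
    have h3 : c k * dd c k = dd c k * c (k + 1) := by
      unfold dd
      rw [← mul_assoc, ← mul_assoc, hb]
      group
    rw [mul_assoc, h3, ← mul_assoc, inv_mul_cancel, one_mul]
  intro j
  induction j with
  | zero =>
    intro k hk
    have e1 : Rest c (k + 1) n = [dd c (k + 1), c (k + 2), c n] := by
      rw [Rest_last c (by omega : (k + 1) + 1 = n)]
    have e2 : c (k + 2) = c n := by rw [show k + 2 = n by omega]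
    have step := he_context (Dlist c k) [c n, c n]
      (replicate_pass (k + 1) (c (k + 1)) (dd c (k + 1)))
    refine he_trans (he_of_eq ?_) (he_trans step (he_of_eq ?_))
    · rw [e1, e2]; simp
    · rw [dd_pass (k + 1) (by omega) (by omega), show k + 1 + 1 = k + 2 by omega,
        show n - 1 = k + 1 by omega, Dlist_succ, show n + 1 = (k + 1) + 2 by omega,
        List.replicate_add, show k + 1 + 1 = k + 2 by omega, e2]
      simp
      rw [show k + 1 + 2 = k + 3 by omega, List.replicate_add]
      rfl
  | succ j ih =>
    intro k hk
    have e1 : Rest c (k + 1) n = dd c (k + 1) :: c (k + 2) :: Rest c (k + 2) n :=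
      Rest_cons c (by omega)
    have step := he_context (Dlist c k) (c (k + 2) :: Rest c (k + 2) n)
      (replicate_pass (k + 1) (c (k + 1)) (dd c (k + 1)))
    refine he_trans (he_of_eq ?_) (he_trans step (he_trans (he_of_eq ?_) (ih (k + 1) (by omega))))
    · rw [e1]; simp
    · rw [dd_pass (k + 1) (by omega) (by omega), show k + 1 + 1 = k + 2 by omega, Dlist_succ]
      simp [List.replicate_succ', show k + 1 + 1 = k + 2 by omega]

theorem Amix_bridge (c : ℕ → G) : ∀ m,
    Amix c m ++ [c (m + 1)] =
      c 1 :: ((List.range m).map fun j => [dd c (j + 1), c (j + 2)]).flatten := by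
  intro m
  induction m with
  | zero => simp [Amix]
  | succ m ih =>
    rw [Amix_succ]
    have : Amix c m ++ [c (m + 1), dd c (m + 1)] ++ [c (m + 1 + 1)] =
        (Amix c m ++ [c (m + 1)]) ++ [dd c (m + 1), c (m + 2)] := by simp
    rw [this, ih, List.range_succ]
    simp

theorem copies12 (c : ℕ → G) (n : ℕ) (hn : 2 ≤ n)
    (hbraid : ∀ i, 1 ≤ i → i + 1 ≤ n → c i * c (i + 1) * c i = c (i + 1) * c i * c (i + 1))
    (hcomm : ∀ i j, 1 ≤ i → j ≤ n → i + 2 ≤ j → c i * c j = c j * c i) :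
    HurwitzEquiv (seqAsc c 1 n ++ seqAsc c 1 n)
      (Dlist c (n - 1) ++ List.replicate (n + 1) (c n)) := by
  have h1 := phase1 c n hcomm (n - 1) 0 (by omega)
  have h2 := phase2 c n hbraid (n - 2) 0 (by omega)
  refine he_trans (he_of_eq ?_) (he_trans h1 (he_trans (he_of_eq ?_) h2))
  · simp [Amix]
  · have b := Amix_bridge c (n - 1)
    rw [show n - 1 + 1 = n by omega] at b
    have : Amix c (n - 1) ++ [c n, c n] = (Amix c (n - 1) ++ [c n]) ++ [c n] := by simp
    rw [this, b]
    have e : Rest c 1 n = ((List.range (n - 1)).map fun j => [dd c (j + 1), c (j + 2)]).flatten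
        ++ [c n] := by
      unfold Rest
      congr 1
      refine congrArg _ (map_range_congr _ _ _ fun i _ => ?_)
      rw [show 1 + i = i + 1 by omega, show i + 1 + 1 = i + 2 by omega]
    rw [e]
    simp [Dlist]

theorem map_range_cons {α : Type*} (F : ℕ → α) (t : ℕ) :
    (List.range (t + 1)).map F = F 0 :: (List.range t).map (fun i => F (i + 1)) := by
  rw [List.range_succ_eq_map, List.map_cons, List.map_map]
  rfl

def db (c : ℕ → G) (i : ℕ) : G := (c (i + 1))⁻¹ * c i * c (i + 1)

def Fk (c : ℕ → G) (j : ℕ) : G :=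
  (c (2 * j) * c (2 * j + 2))⁻¹ * ((c (2 * j + 2))⁻¹ * c (2 * j + 1) * c (2 * j + 2)) *
    (c (2 * j) * c (2 * j + 2))

def Evt (c : ℕ → G) (g j : ℕ) : List G := (List.range (g - j)).map fun i => c (2 * (j + i) + 2)

def Dbt (c : ℕ → G) (g j : ℕ) : List G :=
  (List.range (g - j)).map fun i => db c (2 * (j + i) + 1)

def Prs (c : ℕ → G) (g j : ℕ) : List G :=
  ((List.range (g - j)).map fun i => [c (2 * (j + i) + 2), c (2 * (j + i) + 2)]).flatten

theorem Evt_cons (c : ℕ → G) {g j : ℕ} (h : j < g) :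
    Evt c g j = c (2 * j + 2) :: Evt c g (j + 1) := by
  unfold Evt
  simp only [show g - j = (g - (j + 1)) + 1 by omega, map_range_cons]
  rw [show 2 * (j + 0) + 2 = 2 * j + 2 by omega]
  congr 1
  exact map_range_congr _ _ _ fun i _ => by rw [show j + (i + 1) = j + 1 + i by omega]

theorem Dbt_cons (c : ℕ → G) {g j : ℕ} (h : j < g) :
    Dbt c g j = db c (2 * j + 1) :: Dbt c g (j + 1) := by
  unfold Dbt
  simp only [show g - j = (g - (j + 1)) + 1 by omega, map_range_cons]
  rw [show 2 * (j + 0) + 1 = 2 * j + 1 by omega]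
  congr 1
  exact map_range_congr _ _ _ fun i _ => by rw [show j + (i + 1) = j + 1 + i by omega]

theorem Prs_cons (c : ℕ → G) {g j : ℕ} (h : j < g) :
    Prs c g j = c (2 * j + 2) :: c (2 * j + 2) :: Prs c g (j + 1) := by
  unfold Prs
  simp only [show g - j = (g - (j + 1)) + 1 by omega, map_range_cons]
  rw [show 2 * (j + 0) + 2 = 2 * j + 2 by omega]
  simp only [List.flatten_cons, List.cons_append, List.nil_append]
  congr 2
  refine congrArg _ (map_range_congr _ _ _ fun i _ => ?_)
  rw [show j + (i + 1) = j + 1 + i by omega]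

theorem commute_conj {a b x : G} (ha : Commute a x) (hb : Commute b x) :
    Commute (a⁻¹ * b * a) x :=
  (ha.inv_left.mul_left hb).mul_left ha

theorem conj_eq {x y : G} (h : Commute x y) : y⁻¹ * x * y = x := by
  rw [mul_assoc, h.eq, ← mul_assoc, inv_mul_cancel, one_mul]

theorem conj_through (P A Q B : G) (h1 : Commute B P) (h2 : Commute (A⁻¹ * B * A) Q) :
    (P * A * Q)⁻¹ * B * (P * A * Q) = A⁻¹ * B * A := by
  have e1 : P⁻¹ * B * P = B := conj_eq h1
  have e2 : Q⁻¹ * (A⁻¹ * B * A) * Q = A⁻¹ * B * A := conj_eq h2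
  calc (P * A * Q)⁻¹ * B * (P * A * Q)
      = Q⁻¹ * (A⁻¹ * (P⁻¹ * B * P) * A) * Q := by group
    _ = Q⁻¹ * (A⁻¹ * B * A) * Q := by rw [e1]
    _ = A⁻¹ * B * A := e2

theorem copy34a (c : ℕ → G) (g : ℕ)
    (hcomm : ∀ i j, 1 ≤ i → j ≤ 2 * g → i + 2 ≤ j → c i * c j = c j * c i) :
    ∀ t j, j + t = g →
      HurwitzEquiv (seqAsc c (2 * j + 1) (2 * g)) (Evt c g j ++ Dbt c g j) := by
  intro t
  induction t with
  | zero =>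
    intro j hj
    have hjg : j = g := by omega
    subst hjg
    rw [seqAsc_nil c (by omega)]
    refine he_of_eq ?_
    simp [Evt, Dbt, Nat.sub_self]
  | succ t ih =>
    intro j hj
    have hjg : j < g := by omega
    have edb : db c (2 * j + 1) = (c (2 * j + 2))⁻¹ * c (2 * j + 1) * c (2 * j + 2) := by
      unfold db; rw [show 2 * j + 1 + 1 = 2 * j + 2 by omega]
    have e1 : seqAsc c (2 * j + 1) (2 * g) = c (2 * j + 1) :: seqAsc c (2 * j + 2) (2 * g) := by
      rw [seqAsc_cons c (by omega), show 2 * j + 1 + 1 = 2 * j + 2 by omega]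
    have e2 : seqAsc c (2 * j + 2) (2 * g) = c (2 * j + 2) :: seqAsc c (2 * j + 3) (2 * g) := by
      rw [seqAsc_cons c (by omega), show 2 * j + 2 + 1 = 2 * j + 3 by omega]
    have hstep : HurwitzEquiv (seqAsc c (2 * j + 1) (2 * g))
        (c (2 * j + 2) :: db c (2 * j + 1) :: seqAsc c (2 * j + 3) (2 * g)) := by
      rw [e1, e2, edb]
      exact he_append_right (pair_neg _ _) _
    have hIH := ih (j + 1) (by omega)
    rw [show 2 * (j + 1) + 1 = 2 * j + 3 by omega] at hIH
    have hcons := he_cons (c (2 * j + 2)) (he_cons (db c (2 * j + 1)) hIH)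
    have hc : ∀ a ∈ [db c (2 * j + 1)], ∀ b ∈ Evt c g (j + 1), a * b = b * a := by
      intro a ha b hb
      simp only [List.mem_singleton] at ha
      subst ha
      unfold Evt at hb
      simp only [List.mem_map, List.mem_range] at hb
      obtain ⟨i, hi, rfl⟩ := hb
      have h1 : Commute (c (2 * j + 1)) (c (2 * (j + 1 + i) + 2)) :=
        hcomm _ _ (by omega) (by omega) (by omega)
      have h2 : Commute (c (2 * j + 2)) (c (2 * (j + 1 + i) + 2)) :=
        hcomm _ _ (by omega) (by omega) (by omega)
      rw [edb]
      exact commute_conj h2 h1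
    have hsort : HurwitzEquiv (db c (2 * j + 1) :: (Evt c g (j + 1) ++ Dbt c g (j + 1)))
        (Evt c g (j + 1) ++ (db c (2 * j + 1) :: Dbt c g (j + 1))) := by
      refine he_trans (he_of_eq ?_)
        (he_trans (he_append_right (comm_lists hc) (Dbt c g (j + 1))) (he_of_eq ?_)) <;> simp
    refine he_trans hstep (he_trans hcons (he_trans (he_cons (c (2 * j + 2)) hsort)
      (he_of_eq ?_)))
    rw [Evt_cons c hjg, Dbt_cons c hjg]
    simp

theorem Ev_norm (c : ℕ → G) (g : ℕ) :
    Evt c g 0 = (List.range g).map fun i => c (2 * i + 2) := by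
  unfold Evt
  rw [Nat.sub_zero]
  exact map_range_congr _ _ _ fun i _ => by congr 1; omega

theorem fident (c : ℕ → G) (g : ℕ) (hc0 : c 0 = 1)
    (hcomm : ∀ i j, 1 ≤ i → j ≤ 2 * g → i + 2 ≤ j → c i * c j = c j * c i) :
    ∀ j < g, ((Evt c g 0).prod)⁻¹ * db c (2 * j + 1) * (Evt c g 0).prod = Fk c j := by
  intro j hj
  rcases Nat.eq_zero_or_pos j with rfl | hjpos
  · -- j = 0
    obtain ⟨t, rfl⟩ : ∃ t, g = 1 + t := ⟨g - 1, by omega⟩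
    have hsplit : (Evt c (1 + t) 0).prod =
        c 2 * ((List.range t).map fun i => c (2 * (1 + i) + 2)).prod := by
      rw [Ev_norm, List.range_add, List.map_append, List.prod_append, List.map_map]
      congr 1
      simp [List.range_succ]
    have hB : db c (2 * 0 + 1) = (c 2)⁻¹ * c 1 * c 2 := by
      unfold db; norm_num
    have h2 : Commute ((c 2)⁻¹ * db c (2 * 0 + 1) * c 2)
        (((List.range t).map fun i => c (2 * (1 + i) + 2)).prod) := by
      refine Commute.list_prod_right _ _ fun x hx => ?_
      simp only [List.mem_map, List.mem_range] at hx
      obtain ⟨i, hi, rfl⟩ := hx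
      have ha : Commute (c 2) (c (2 * (1 + i) + 2)) := hcomm _ _ (by omega) (by omega) (by omega)
      have hb : Commute (c 1) (c (2 * (1 + i) + 2)) := hcomm _ _ (by omega) (by omega) (by omega)
      rw [hB]
      exact commute_conj ha (commute_conj ha hb)
    have key := conj_through 1 (c 2) (((List.range t).map fun i => c (2 * (1 + i) + 2)).prod)
      (db c (2 * 0 + 1)) (Commute.one_right _) h2
    rw [one_mul] at key
    rw [hsplit, key, hB]
    unfold Fk
    norm_num [hc0]
  · -- j ≥ 1
    obtain ⟨p, rfl⟩ : ∃ p, j = p + 1 := ⟨j - 1, by omega⟩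
    obtain ⟨t, rfl⟩ : ∃ t, g = p + 2 + t := ⟨g - p - 2, by omega⟩
    set Q := ((List.range t).map fun i => c (2 * (p + 2 + i) + 2)).prod with hQ
    set P := ((List.range p).map fun i => c (2 * i + 2)).prod with hP
    have hsplit : (Evt c (p + 2 + t) 0).prod = P * (c (2 * p + 2) * c (2 * p + 4)) * Q := by
      rw [Ev_norm, List.range_add, List.map_append, List.prod_append, List.map_map]
      congr 1
      rw [show p + 2 = p + 1 + 1 by omega, List.range_succ, List.range_succ]
      simp only [List.map_append, List.prod_append, List.map_cons, List.map_nil,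
        List.prod_cons, List.prod_nil]
      rw [show 2 * (p + 1) + 2 = 2 * p + 4 by omega, hP]
      group
    have hB : db c (2 * (p + 1) + 1) = (c (2 * p + 4))⁻¹ * c (2 * p + 3) * c (2 * p + 4) := by
      unfold db
      rw [show 2 * (p + 1) + 1 + 1 = 2 * p + 4 by omega, show 2 * (p + 1) + 1 = 2 * p + 3 by omega]
    have h1 : Commute (db c (2 * (p + 1) + 1)) P := by
      rw [hP]
      refine Commute.list_prod_right _ _ fun x hx => ?_
      simp only [List.mem_map, List.mem_range] at hx
      obtain ⟨i, hi, rfl⟩ := hx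
      have ha : Commute (c (2 * i + 2)) (c (2 * p + 4)) :=
        hcomm _ _ (by omega) (by omega) (by omega)
      have hb : Commute (c (2 * i + 2)) (c (2 * p + 3)) :=
        hcomm _ _ (by omega) (by omega) (by omega)
      rw [hB]
      exact commute_conj ha.symm hb.symm
    have h2 : Commute ((c (2 * p + 2) * c (2 * p + 4))⁻¹ * db c (2 * (p + 1) + 1) *
        (c (2 * p + 2) * c (2 * p + 4))) Q := by
      refine Commute.list_prod_right _ _ fun x hx => ?_
      simp only [List.mem_map, List.mem_range] at hx
      obtain ⟨i, hi, rfl⟩ := hx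
      have ha : Commute (c (2 * p + 2)) (c (2 * (p + 2 + i) + 2)) :=
        hcomm _ _ (by omega) (by omega) (by omega)
      have hb : Commute (c (2 * p + 3)) (c (2 * (p + 2 + i) + 2)) :=
        hcomm _ _ (by omega) (by omega) (by omega)
      have hc : Commute (c (2 * p + 4)) (c (2 * (p + 2 + i) + 2)) :=
        hcomm _ _ (by omega) (by omega) (by omega)
      rw [hB]
      exact commute_conj (ha.mul_left hc) (commute_conj hc hb)
    have key := conj_through P (c (2 * p + 2) * c (2 * p + 4)) Q (db c (2 * (p + 1) + 1)) h1 h2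
    rw [hsplit, key, hB]
    unfold Fk
    rw [show 2 * (p + 1) + 2 = 2 * p + 4 by omega, show 2 * (p + 1) + 1 = 2 * p + 3 by omega,
      show 2 * (p + 1) = 2 * p + 2 by omega]

theorem copy34c (c : ℕ → G) (g : ℕ) (hc0 : c 0 = 1)
    (hcomm : ∀ i j, 1 ≤ i → j ≤ 2 * g → i + 2 ≤ j → c i * c j = c j * c i) :
    ∀ j, j ≤ g →
      HurwitzEquiv
        ((List.range j).map (fun i => db c (2 * i + 1)) ++ Evt c g 0 ++
          (List.range (g - j)).map fun i => Fk c (j + i))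
        (Evt c g 0 ++ (List.range g).map (Fk c)) := by
  intro j
  induction j with
  | zero =>
    intro _
    refine he_of_eq ?_
    rw [Nat.sub_zero]
    simp only [List.range_zero, List.map_nil, List.nil_append]
    congr 1
    exact map_range_congr _ _ _ fun i _ => by congr 1; omega
  | succ j ih =>
    intro hjg
    have h1 : HurwitzEquiv (db c (2 * j + 1) :: Evt c g 0)
        (Evt c g 0 ++ [Fk c j]) := by
      have := pass_block (db c (2 * j + 1)) (Evt c g 0)
      rwa [fident c g hc0 hcomm j (by omega)] at this
    have h2 := he_context ((List.range j).map fun i => db c (2 * i + 1))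
      ((List.range (g - (j + 1))).map fun i => Fk c (j + 1 + i)) h1
    have etail : (List.range (g - j)).map (fun i => Fk c (j + i)) =
        Fk c j :: (List.range (g - (j + 1))).map fun i => Fk c (j + 1 + i) := by
      simp only [show g - j = (g - (j + 1)) + 1 by omega, map_range_cons]
      rw [show j + 0 = j by omega]
      congr 1
      exact map_range_congr _ _ _ fun i _ => by rw [show j + (i + 1) = j + 1 + i by omega]
    refine he_trans (he_of_eq ?_) (he_trans h2 (he_trans (he_of_eq ?_) (ih (by omega))))
    · rw [List.range_succ]; simp
    · rw [etail]; simp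

theorem copy34d (c : ℕ → G) (g : ℕ)
    (hcomm : ∀ i j, 1 ≤ i → j ≤ 2 * g → i + 2 ≤ j → c i * c j = c j * c i) :
    ∀ t j, j + t = g → HurwitzEquiv (Evt c g j ++ Evt c g j) (Prs c g j) := by
  intro t
  induction t with
  | zero =>
    intro j hj
    have hjg : j = g := by omega
    subst hjg
    refine he_of_eq ?_
    simp [Evt, Prs, Nat.sub_self]
  | succ t ih =>
    intro j hj
    have hjg : j < g := by omega
    have hc : ∀ a ∈ Evt c g (j + 1), ∀ b ∈ [c (2 * j + 2)], a * b = b * a := by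
      intro a ha b hb
      unfold Evt at ha
      simp only [List.mem_map, List.mem_range] at ha
      obtain ⟨i, hi, rfl⟩ := ha
      simp only [List.mem_singleton] at hb
      subst hb
      exact (hcomm _ _ (by omega) (by omega) (by omega)).symm
    have hmove : HurwitzEquiv (Evt c g (j + 1) ++ (c (2 * j + 2) :: Evt c g (j + 1)))
        (c (2 * j + 2) :: (Evt c g (j + 1) ++ Evt c g (j + 1))) := by
      refine he_trans (he_of_eq ?_)
        (he_trans (he_append_right (comm_lists hc) (Evt c g (j + 1))) (he_of_eq ?_)) <;> simp
    refine he_trans (he_of_eq ?_)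
      (he_trans (he_cons (c (2 * j + 2)) hmove)
        (he_trans (he_cons _ (he_cons _ (ih (j + 1) (by omega)))) (he_of_eq ?_)))
    · rw [Evt_cons c hjg]; simp
    · rw [Prs_cons c hjg]

end HW

open HW in
/-- key equivalence of Theorem 5.6: with `d j = c (j+1) * c j * (c (j+1))⁻¹`,
`d̄ j = (c (j+1))⁻¹ * c j * c (j+1)`,
`f j = (c (j-1) * c (j+1))⁻¹ * d̄ j * (c (j-1) * c (j+1))` and the convention `c 0 = 1`,
the sequence `(c 1, …, c (2g))` repeated `4` times is Hurwitz equivalent to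
`(d 1, …, d (2g-1), c 2, c 2, c 4, c 4, …, c (2g-2), c (2g-2), (c (2g))^{2g+3},
f 1, f 3, …, f (2g-1), d̄ 1, d̄ 3, …, d̄ (2g-1))`. -/
theorem statement14 {G : Type*} [Group G] (g : ℕ) (hg : 2 ≤ g) (c : ℕ → G)
    (hc0 : c 0 = 1)
    (hbraid : ∀ i, 1 ≤ i → i + 1 ≤ 2 * g →
      c i * c (i + 1) * c i = c (i + 1) * c i * c (i + 1))
    (hcomm : ∀ i j, 1 ≤ i → j ≤ 2 * g → i + 2 ≤ j → c i * c j = c j * c i) :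
    HurwitzEquiv
      (seqAsc c 1 (2 * g) ++ seqAsc c 1 (2 * g) ++ seqAsc c 1 (2 * g) ++ seqAsc c 1 (2 * g))
      (((List.range (2 * g - 1)).map fun j => c (j + 2) * c (j + 1) * (c (j + 2))⁻¹) ++
        (((List.range (g - 1)).map fun j => [c (2 * j + 2), c (2 * j + 2)]).flatten) ++
        List.replicate (2 * g + 3) (c (2 * g)) ++
        ((List.range g).map fun j =>
          (c (2 * j) * c (2 * j + 2))⁻¹ *
            ((c (2 * j + 2))⁻¹ * c (2 * j + 1) * c (2 * j + 2)) *
            (c (2 * j) * c (2 * j + 2))) ++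
        ((List.range g).map fun j =>
          (c (2 * j + 2))⁻¹ * c (2 * j + 1) * c (2 * j + 2))) := by
  set S := seqAsc c 1 (2 * g) with hS
  set Ev := Evt c g 0 with hEv
  set Db := Dbt c g 0 with hDb
  set Fl := (List.range g).map (Fk c) with hFl
  set Et := ((List.range (g - 1)).map fun j => [c (2 * j + 2), c (2 * j + 2)]).flatten with hEt
  set Dl := Dlist c (2 * g - 1) with hDl
  set rep := List.replicate (2 * g + 1) (c (2 * g)) with hrep
  -- component equivalences
  have h12 : HurwitzEquiv (S ++ S) (Dl ++ rep) :=
    copies12 c (2 * g) (by omega) hbraid hcomm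
  have h34 : HurwitzEquiv S (Ev ++ Db) := by
    have := copy34a c g hcomm g 0 (by omega)
    rwa [show 2 * 0 + 1 = 1 by omega] at this
  have eDb : Db = (List.range g).map fun i => db c (2 * i + 1) := by
    rw [hDb]; unfold Dbt
    rw [Nat.sub_zero]
    exact map_range_congr _ _ _ fun i _ => by congr 1; omega
  have hDbEv : HurwitzEquiv (Db ++ Ev) (Ev ++ Fl) := by
    have h := copy34c c g hc0 hcomm g (le_refl g)
    rw [Nat.sub_self] at h
    simp only [List.range_zero, List.map_nil, List.append_nil] at h
    rw [← eDb] at h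
    exact h
  have hEvEv : HurwitzEquiv (Ev ++ Ev) (Prs c g 0) := copy34d c g hcomm g 0 (by omega)
  have hPrs : Prs c g 0 = Et ++ [c (2 * g), c (2 * g)] := by
    have hr : List.range g = List.range (g - 1) ++ [g - 1] := by
      conv_lhs => rw [show g = g - 1 + 1 by omega]
      rw [List.range_succ]
    unfold Prs
    rw [Nat.sub_zero, hr, List.map_append, List.flatten_append, hEt]
    congr 1
    · refine congrArg List.flatten (map_range_congr _ _ _ fun i _ => ?_)
      rw [show 2 * (0 + i) + 2 = 2 * i + 2 by omega]
    · simp only [List.map_cons, List.map_nil, List.flatten_cons, List.flatten_nil]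
      rw [show 2 * (0 + (g - 1)) + 2 = 2 * g by omega]
      simp
  have hcommE : HurwitzEquiv (rep ++ Et) (Et ++ rep) := by
    refine comm_lists fun a ha b hb => ?_
    rw [hrep] at ha
    have ea : a = c (2 * g) := List.eq_of_mem_replicate ha
    rw [hEt] at hb
    simp only [List.mem_flatten, List.mem_map, List.mem_range] at hb
    obtain ⟨l, hl, hbl⟩ := hb
    obtain ⟨i, hi, hli⟩ := hl
    rw [← hli] at hbl
    simp only [List.mem_cons, List.not_mem_nil, or_false] at hbl
    have eb : b = c (2 * i + 2) := by rcases hbl with h | h <;> exact h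
    rw [ea, eb]
    exact (hcomm _ _ (by omega) (by omega) (by omega)).symm
  -- final list equalities
  have eDl : Dl = (List.range (2 * g - 1)).map fun j => c (j + 2) * c (j + 1) * (c (j + 2))⁻¹ := by
    rw [hDl]; unfold Dlist
    exact map_range_congr _ _ _ fun i _ => rfl
  have eDb2 : Db = (List.range g).map fun j =>
      (c (2 * j + 2))⁻¹ * c (2 * j + 1) * c (2 * j + 2) := by
    rw [eDb]
    refine map_range_congr _ _ _ fun i _ => ?_
    unfold db
    rw [show 2 * i + 1 + 1 = 2 * i + 2 by omega]
  have eFl : Fl = (List.range g).map fun j =>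
      (c (2 * j) * c (2 * j + 2))⁻¹ *
        ((c (2 * j + 2))⁻¹ * c (2 * j + 1) * c (2 * j + 2)) *
        (c (2 * j) * c (2 * j + 2)) := by
    rw [hFl]
    exact map_range_congr _ _ _ fun i _ => rfl
  have erep : rep ++ [c (2 * g), c (2 * g)] = List.replicate (2 * g + 3) (c (2 * g)) := by
    rw [hrep]
    conv_rhs => rw [show 2 * g + 3 = (2 * g + 1) + 2 by omega, List.replicate_add]
    rfl
  -- assemble
  have step1 : HurwitzEquiv (S ++ S ++ S ++ S) ((Dl ++ rep) ++ ((Ev ++ Db) ++ (Ev ++ Db))) := by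
    refine he_trans (he_of_eq ?_) (he_append h12 (he_append h34 h34))
    simp
  have step2 : HurwitzEquiv ((Dl ++ rep) ++ ((Ev ++ Db) ++ (Ev ++ Db)))
      ((Dl ++ rep ++ Ev) ++ (Ev ++ Fl) ++ Db) := by
    refine he_trans (he_of_eq ?_) (he_context (Dl ++ rep ++ Ev) Db hDbEv)
    simp
  have step3 : HurwitzEquiv ((Dl ++ rep ++ Ev) ++ (Ev ++ Fl) ++ Db)
      ((Dl ++ rep) ++ Prs c g 0 ++ (Fl ++ Db)) := by
    refine he_trans (he_of_eq ?_) (he_context (Dl ++ rep) (Fl ++ Db) hEvEv)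
    simp
  have step4 : HurwitzEquiv ((Dl ++ rep) ++ Prs c g 0 ++ (Fl ++ Db))
      (Dl ++ (Et ++ rep) ++ ([c (2 * g), c (2 * g)] ++ Fl ++ Db)) := by
    refine he_trans (he_of_eq ?_) (he_context Dl ([c (2 * g), c (2 * g)] ++ Fl ++ Db) hcommE)
    rw [hPrs]
    simp
  refine he_trans step1 (he_trans step2 (he_trans step3 (he_trans step4 (he_of_eq ?_))))
  rw [← erep, ← eDl, ← eDb2, ← eFl]
  simp
end
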